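/- arXiv:2506.15630 — 2 statements merged into one kernel-verified Lean document; each statement's English description precedes it below -/
import Mathlib

section
/- Let W be an N×N matrix with nonnegative real entries, and suppose that the family of weights of simple loops is summable with c := Σ_{L ∈ 𝕊𝕃} W_L < 1. Then for all nodes i, j ∈ {1,…,N}, the family (W_{(v,(L₁,…,L_Q))}) indexed by pairs (v,(L₁,…,L_Q)) ∈ 𝕍_{ij} × 𝕊𝕃^{(ℕ)} is summable, and its sum equals T⋆_{ij} · Σ_{Q=0}^∞ c^Q = T⋆_{ij}/(1−c). -/
variable {N : ℕ}

/-- The list of nodes visited by a list of edges `(i₁,j₁)⋯(i_L,j_L)`,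
namely `[i₁, j₁, j₂, …, j_L]` (which equals `[i₁, …, i_L, j_L]` for a path). -/
def edgeNodes : List (Fin N × Fin N) → List (Fin N)
  | [] => []
  | e :: rest => e.1 :: ((e :: rest).map Prod.snd)

/-- An edge list is a path when consecutive edges are compatible: `jₗ = i_{ℓ+1}`. -/
def IsPathList (l : List (Fin N × Fin N)) : Prop :=
  l.Chain' fun e f => e.2 = f.1

/-- `l` is a path from `i` to `j`; the empty path `𝟎` is a path from `i` to `i` for every `i`. -/
def PathFromTo (l : List (Fin N × Fin N)) (i j : Fin N) : Prop :=
  IsPathList l ∧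
    ((l = [] ∧ i = j) ∨ ((edgeNodes l).head? = some i ∧ (edgeNodes l).getLast? = some j))

/-- A path is non-intersecting when the visited nodes are pairwise distinct. -/
def NonIntersecting (l : List (Fin N × Fin N)) : Prop :=
  (edgeNodes l).Nodup

/-- A loop: a nonempty path with `p(1) = p(|p|+1)`. -/
def IsLoop (l : List (Fin N × Fin N)) : Prop :=
  IsPathList l ∧ l ≠ [] ∧ (edgeNodes l).head? = (edgeNodes l).getLast?

/-- A simple loop: a loop whose only repeated visited node is the initial/terminal one. -/
def IsSimpleLoop (l : List (Fin N × Fin N)) : Prop :=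
  IsLoop l ∧ (edgeNodes l).dropLast.Nodup

/-- The weight `W_p` of a path: the product of the weights of its edges (`W_𝟎 = 1`). -/
def pathWeight (W : Matrix (Fin N) (Fin N) ℝ) (l : List (Fin N × Fin N)) : ℝ :=
  (l.map fun e => W e.1 e.2).prod

/-- The simple-path matrix `T⋆_{ij} = Σ_{p ∈ 𝕍_{ij}} W_p` (a sum over a finite set). -/
noncomputable def Tstar (W : Matrix (Fin N) (Fin N) ℝ) (i j : Fin N) : ℝ :=
  ∑' q : {l : List (Fin N × Fin N) // PathFromTo l i j ∧ NonIntersecting l}, pathWeight W q.1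

/-- The sum `c = Σ_{L ∈ 𝕊𝕃} W_L` of the weights of all simple loops. -/
noncomputable def slSum (W : Matrix (Fin N) (Fin N) ℝ) : ℝ :=
  ∑' L : {l : List (Fin N × Fin N) // IsSimpleLoop l}, pathWeight W L.1


section Aux

open ENNReal

lemma pathWeight_nonneg (W : Matrix (Fin N) (Fin N) ℝ) (hW : ∀ i j, 0 ≤ W i j)
    (l : List (Fin N × Fin N)) : 0 ≤ pathWeight W l := by
  induction l with
  | nil => simp [pathWeight]
  | cons e t ih => simpa [pathWeight] using mul_nonneg (hW e.1 e.2) ih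

lemma ofReal_list_prod {ι : Type*} (f : ι → ℝ) (hf : ∀ x, 0 ≤ f x) (l : List ι) :
    ENNReal.ofReal ((l.map f).prod) = (l.map fun x => ENNReal.ofReal (f x)).prod := by
  induction l with
  | nil => simp
  | cons a t ih => simp [ENNReal.ofReal_mul (hf a), ih]

lemma tsum_pi_fin_prod {ι : Type*} (f : ι → ℝ≥0∞) (n : ℕ) :
    ∑' v : Fin n → ι, ∏ k, f (v k) = (∑' x, f x) ^ n := by
  induction n with
  | zero =>
      have hu : ∀ v : Fin 0 → ι, v = (fun i => i.elim0) := fun v => funext fun i => i.elim0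
      rw [pow_zero, tsum_eq_single (fun i : Fin 0 => i.elim0)
        (fun v hv => absurd (hu v) hv)]
      simp
  | succ n ih =>
      rw [← (Fin.consEquiv fun _ : Fin (n + 1) => ι).tsum_eq]
      have key : ∀ p : ι × (Fin n → ι),
          (∏ k, f (((Fin.consEquiv fun _ : Fin (n + 1) => ι) p) k)) = f p.1 * ∏ k, f (p.2 k) := by
        rintro ⟨a, v⟩
        rw [Fin.prod_univ_succ]
        simp [Fin.consEquiv]
      rw [tsum_congr key, ENNReal.tsum_prod']
      simp only [ENNReal.tsum_mul_left]
      rw [ENNReal.tsum_mul_right, ih, pow_succ, mul_comm]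

lemma tsum_list_prod {ι : Type*} (f : ι → ℝ≥0∞) :
    ∑' l : List ι, (l.map f).prod = ∑' n : ℕ, (∑' x, f x) ^ n := by
  rw [← List.equivSigmaTuple.symm.tsum_eq, ENNReal.tsum_sigma']
  refine tsum_congr fun n => ?_
  have : ∀ v : Fin n → ι,
      (((List.equivSigmaTuple.symm ⟨n, v⟩ : List ι)).map f).prod = ∏ k, f (v k) := by
    intro v
    simp [List.equivSigmaTuple, List.map_ofFn, List.prod_ofFn, Function.comp]
  rw [tsum_congr this, tsum_pi_fin_prod]

lemma finite_paths (i j : Fin N) :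
    Finite {l : List (Fin N × Fin N) // PathFromTo l i j ∧ NonIntersecting l} := by
  have hsub : {l : List (Fin N × Fin N) | PathFromTo l i j ∧ NonIntersecting l} ⊆
      {l | l.length ≤ N} := by
    rintro l ⟨-, hni⟩
    cases l with
    | nil => simp
    | cons e t =>
        have hnd : (edgeNodes (e :: t)).Nodup := hni
        have hlen := hnd.length_le_card
        simp only [edgeNodes, List.length_cons, List.length_map, Fintype.card_fin] at hlen
        simpa using Nat.le_of_succ_le hlen
  exact ((List.finite_length_le _ N).subset hsub).to_subtype

end Aux

/-- If the total weight of simple loops is `c < 1`, then the family of extended weights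
indexed by `𝕍_{ij} × 𝕊𝕃^{(ℕ)}` is summable with sum `T⋆_{ij} · Σ_Q c^Q = T⋆_{ij}/(1-c)`. -/
theorem decomposition_weight_sum
    (N : ℕ) (hN : 1 ≤ N) (W : Matrix (Fin N) (Fin N) ℝ) (hW : ∀ i j, 0 ≤ W i j)
    (hsum : Summable fun L : {l : List (Fin N × Fin N) // IsSimpleLoop l} => pathWeight W L.1)
    (hc : slSum W < 1) :
    ∀ i j : Fin N,
      Summable (fun X : {l : List (Fin N × Fin N) // PathFromTo l i j ∧ NonIntersecting l} ×
          List {l : List (Fin N × Fin N) // IsSimpleLoop l} =>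
        pathWeight W X.1.1 * (X.2.map fun L => pathWeight W L.1).prod) ∧
      (∑' X : {l : List (Fin N × Fin N) // PathFromTo l i j ∧ NonIntersecting l} ×
          List {l : List (Fin N × Fin N) // IsSimpleLoop l},
        pathWeight W X.1.1 * (X.2.map fun L => pathWeight W L.1).prod) =
        Tstar W i j * (∑' Q : ℕ, slSum W ^ Q) ∧
      (∑' X : {l : List (Fin N × Fin N) // PathFromTo l i j ∧ NonIntersecting l} ×
          List {l : List (Fin N × Fin N) // IsSimpleLoop l},
        pathWeight W X.1.1 * (X.2.map fun L => pathWeight W L.1).prod) =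
        Tstar W i j / (1 - slSum W) := by
  intro i j
  classical
  set ι := {l : List (Fin N × Fin N) // IsSimpleLoop l}
  set A := {l : List (Fin N × Fin N) // PathFromTo l i j ∧ NonIntersecting l}
  have hfin : Finite A := finite_paths i j
  have hg0 : ∀ a : A, 0 ≤ pathWeight W a.1 := fun a => pathWeight_nonneg W hW _
  have hf0 : ∀ x : ι, 0 ≤ pathWeight W x.1 := fun x => pathWeight_nonneg W hW _
  set c : ℝ := slSum W with hcdef
  have hc0 : 0 ≤ c := tsum_nonneg fun x => hf0 x
  have hT0 : 0 ≤ Tstar W i j := tsum_nonneg fun a => hg0 a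
  set fE : ι → ENNReal := fun x => ENNReal.ofReal (pathWeight W x.1)
  set gE : A → ENNReal := fun a => ENNReal.ofReal (pathWeight W a.1)
  have hcE : (∑' x : ι, fE x) = ENNReal.ofReal c := by
    rw [hcdef, slSum, ENNReal.ofReal_tsum_of_nonneg hf0 hsum]
  have hgsummable : Summable fun a : A => pathWeight W a.1 := Summable.of_finite
  have hTE : (∑' a : A, gE a) = ENNReal.ofReal (Tstar W i j) := by
    rw [Tstar, ENNReal.ofReal_tsum_of_nonneg hg0 hgsummable]
  set FE : A × List ι → ENNReal := fun X => gE X.1 * (X.2.map fE).prod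
  have hpt : ∀ X : A × List ι,
      FE X = ENNReal.ofReal
        (pathWeight W X.1.1 * (X.2.map fun L => pathWeight W L.1).prod) := by
    rintro ⟨a, l⟩
    rw [ENNReal.ofReal_mul (hg0 a)]
    simp only [FE, gE]
    congr 1
    exact (ofReal_list_prod _ hf0 l).symm
  have hS : (∑' X : A × List ι, FE X)
      = ENNReal.ofReal (Tstar W i j) * (1 - ENNReal.ofReal c)⁻¹ := by
    rw [ENNReal.tsum_prod']
    simp only [FE, ENNReal.tsum_mul_left]
    rw [ENNReal.tsum_mul_right, tsum_list_prod, hcE, hTE, ENNReal.tsum_geometric]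
  have h1c : (0:ℝ) < 1 - c := by linarith
  have hone : (1 : ENNReal) - ENNReal.ofReal c = ENNReal.ofReal (1 - c) := by
    rw [ENNReal.ofReal_sub _ hc0, ENNReal.ofReal_one]
  have hSne : (∑' X : A × List ι, FE X) ≠ ⊤ := by
    rw [hS, hone]
    exact ENNReal.mul_ne_top ENNReal.ofReal_ne_top
      (ENNReal.inv_ne_top.2 (by simp only [ne_eq, ENNReal.ofReal_eq_zero, not_le]; linarith))
  have hsummable : Summable (fun X : A × List ι =>
      pathWeight W X.1.1 * (X.2.map fun L => pathWeight W L.1).prod) := by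
    have := ENNReal.summable_toReal hSne
    refine this.congr fun X => ?_
    rw [hpt X, ENNReal.toReal_ofReal]
    exact mul_nonneg (hg0 X.1) (List.prod_nonneg (by
      intro x hx
      obtain ⟨L, -, rfl⟩ := List.mem_map.1 hx
      exact hf0 L))
  have hsumval : (∑' X : A × List ι,
      pathWeight W X.1.1 * (X.2.map fun L => pathWeight W L.1).prod)
      = Tstar W i j / (1 - c) := by
    have h1 : (∑' X : A × List ι,
        pathWeight W X.1.1 * (X.2.map fun L => pathWeight W L.1).prod)
        = (∑' X : A × List ι, FE X).toReal := by
      rw [ENNReal.tsum_toReal_eq fun X => by rw [hpt X]; exact ENNReal.ofReal_ne_top]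
      refine tsum_congr fun X => ?_
      rw [hpt X, ENNReal.toReal_ofReal]
      exact mul_nonneg (hg0 X.1) (List.prod_nonneg (by
        intro x hx
        obtain ⟨L, -, rfl⟩ := List.mem_map.1 hx
        exact hf0 L))
    rw [h1, hS, hone, ENNReal.toReal_mul, ENNReal.toReal_inv,
      ENNReal.toReal_ofReal hT0, ENNReal.toReal_ofReal h1c.le, div_eq_mul_inv]
  refine ⟨hsummable, ?_, hsumval⟩
  rw [hsumval, tsum_geometric_of_lt_one hc0 hc, div_eq_mul_inv]
end

section
/- The map Dec : ℙ × ℙ^{(ℕ)} → ℙ × ℙ^{(ℕ)} defined by Dec(p, (L₁,…,L_Q)) := (E(p), (L₁,…,L_Q, L(p))) is injective. Moreover, for every X ∈ ℙ × ℙ^{(ℕ)} one has W_{Dec(X)} = W_X. (Paper's Corollary on the single-step loop-extraction map Dec.) -/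
variable {N : ℕ}

/-- Helper: scan the node list keeping the list `seen` of previously visited nodes; returns
`some (m, x)` where `m` is the 0-based position of the first node `x` that was already
visited, and `none` if there is no such node. -/
def crossDataAux : List (Fin N) → List (Fin N) → Option (ℕ × Fin N)
  | _, [] => none
  | seen, a :: rest =>
    if a ∈ seen then some (seen.length, a) else crossDataAux (seen ++ [a]) rest

/-- `crossData ns = some (m, x)` iff `m` is the smallest (0-based) index such that
`ns[m] = x` already occurs among `ns[0], …, ns[m-1]`; `none` iff `ns` has no duplicate.
In the paper's (1-based) notation, `m = ℓ_×(p) - 1` and `x = i_×(p)`. -/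
def crossData (ns : List (Fin N)) : Option (ℕ × Fin N) :=
  crossDataAux [] ns

/-- `ℓ₀(p) - 1` in 0-based indexing: the first (0-based) position at which the first
crossing point of `p` is visited (junk value `0` if `p` is non-intersecting). -/
def ell0 (p : List (Fin N × Fin N)) : ℕ :=
  match crossData (edgeNodes p) with
  | none => 0
  | some (_, x) => (edgeNodes p).idxOf x

/-- The first loop `L(p)`: the splice `p[ℓ₀(p), ℓ_×(p))`, and `𝟎` if `p` is non-intersecting. -/
def Lmap (p : List (Fin N × Fin N)) : List (Fin N × Fin N) :=
  match crossData (edgeNodes p) with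
  | none => []
  | some (mx, x) => (p.drop ((edgeNodes p).idxOf x)).take (mx - (edgeNodes p).idxOf x)

/-- The remainder `E(p) = p[1, ℓ₀(p)) · p[ℓ_×(p), |p|+1)` after extracting the first loop,
and `E(p) = p` if `p` is non-intersecting. -/
def Emap (p : List (Fin N × Fin N)) : List (Fin N × Fin N) :=
  match crossData (edgeNodes p) with
  | none => p
  | some (mx, x) => p.take ((edgeNodes p).idxOf x) ++ p.drop mx

/-- The single-step loop-extraction map
`Dec(p, (L₁,…,L_Q)) = (E(p), (L₁,…,L_Q, L(p)))` on pairs of a path and a list of paths. -/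
def DecStep (X : List (Fin N × Fin N) × List (List (Fin N × Fin N))) :
    List (Fin N × Fin N) × List (List (Fin N × Fin N)) :=
  (Emap X.1, X.2 ++ [Lmap X.1])

/-- The extended weight `W_{(v,(L₁,…,L_Q))} = W_v · W_{L₁} ⋯ W_{L_Q}`. -/
def extWeight (W : Matrix (Fin N) (Fin N) ℝ)
    (X : List (Fin N × Fin N) × List (List (Fin N × Fin N))) : ℝ :=
  pathWeight W X.1 * (X.2.map (pathWeight W)).prod

-- helper lemmas to insert before the theorem
section Helpers
variable {N : ℕ}

lemma crossDataAux_spec (l : List (Fin N)) : ∀ (seen : List (Fin N)) (m : ℕ) (x : Fin N),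
    crossDataAux seen l = some (m, x) →
    seen.length ≤ m ∧ m - seen.length < l.length ∧
      l[m - seen.length]? = some x ∧ x ∈ seen ++ l.take (m - seen.length) := by
  induction l with
  | nil => intro seen m x h; simp [crossDataAux] at h
  | cons a rest ih =>
    intro seen m x h
    rw [crossDataAux] at h
    by_cases ha : a ∈ seen
    · simp [ha] at h
      obtain ⟨hm, hx⟩ := h
      subst hm; subst hx
      simp [ha]
    · simp [ha] at h
      obtain ⟨h1, h2, h3, h4⟩ := ih (seen ++ [a]) m x h
      simp only [List.length_append, List.length_cons, List.length_nil] at h1 h2 h3 h4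
      have hms : m - seen.length = (m - (seen.length + 1)) + 1 := by omega
      refine ⟨by omega, by simp only [List.length_cons]; omega, ?_, ?_⟩
      · rw [hms]; simpa using h3
      · rw [hms]
        simp only [List.take_succ_cons, List.append_assoc, List.singleton_append] at h4 ⊢
        simpa using h4

lemma indexOf_lt_of_mem_take {x : Fin N} {l : List (Fin N)} {n : ℕ} (h : x ∈ l.take n) :
    l.idxOf x < n := by
  have h1 : l.idxOf x = (l.take n).idxOf x := by
    conv_lhs => rw [← List.take_append_drop n l]
    exact List.idxOf_append_of_mem h
  calc l.idxOf x = (l.take n).idxOf x := h1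
    _ < (l.take n).length := List.idxOf_lt_length_iff.2 h
    _ ≤ n := by simpa using List.length_take_le n l

lemma not_mem_take_indexOf {x : Fin N} {l : List (Fin N)} :
    x ∉ l.take (l.idxOf x) := fun h => absurd (indexOf_lt_of_mem_take h) (lt_irrefl _)

/-- `edgeNodes` of a nonempty path list equals the list of first coordinates plus the
final node. -/
lemma edgeNodes_eq (p : List (Fin N × Fin N)) (hp : IsPathList p) (h : p ≠ []) :
    edgeNodes p = p.map Prod.fst ++ [(p.getLast h).2] := by
  induction p with
  | nil => exact absurd rfl h
  | cons e rest ih =>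
    rcases rest with _ | ⟨f, rest'⟩
    · simp [edgeNodes]
    · have hp' : IsPathList (f :: rest') := (List.isChain_cons_cons.1 hp).2
      have hef : e.2 = f.1 := (List.isChain_cons_cons.1 hp).1
      have := ih hp' (by simp)
      simp only [edgeNodes, List.map_cons] at this ⊢
      rw [List.getLast_cons (by simp), hef]
      simpa using congrArg (List.cons e.1) this

lemma length_edgeNodes (p : List (Fin N × Fin N)) (h : p ≠ []) :
    (edgeNodes p).length = p.length + 1 := by
  rcases p with _ | ⟨e, rest⟩
  · exact absurd rfl h
  · simp [edgeNodes]

/-- Basic data extracted from a positive crossData result. -/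
lemma crossData_some (p : List (Fin N × Fin N)) (mx : ℕ) (x : Fin N)
    (h : crossData (edgeNodes p) = some (mx, x)) :
    (edgeNodes p).idxOf x < mx ∧ mx ≤ p.length ∧ (edgeNodes p)[mx]? = some x := by
  obtain ⟨h1, h2, h3, h4⟩ := crossDataAux_spec (edgeNodes p) [] mx x h
  simp only [List.length_nil, Nat.sub_zero, List.nil_append] at h1 h2 h3 h4
  have hne : p ≠ [] := by
    rintro rfl
    simp [edgeNodes] at h2
  have hlen := length_edgeNodes p hne
  exact ⟨indexOf_lt_of_mem_take h4, by omega, h3⟩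

/-- The splice decomposition of `p` (no path hypothesis needed). -/
lemma decomp (p : List (Fin N × Fin N)) (mx : ℕ) (x : Fin N)
    (h : crossData (edgeNodes p) = some (mx, x)) :
    p = p.take ((edgeNodes p).idxOf x) ++ Lmap p ++ p.drop mx := by
  obtain ⟨hi, hmx, -⟩ := crossData_some p mx x h
  set i := (edgeNodes p).idxOf x with hidef
  have hL : Lmap p = (p.drop i).take (mx - i) := by
    unfold Lmap crossData
    rw [show crossDataAux [] (edgeNodes p) = some (mx, x) from h]
  rw [hL, List.append_assoc]
  have : (p.drop i).take (mx - i) ++ p.drop mx = p.drop i := by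
    have : p.drop mx = (p.drop i).drop (mx - i) := by
      rw [List.drop_drop]
      congr 1
      omega
    rw [this, List.take_append_drop]
  rw [this, List.take_append_drop]

lemma Emap_eq (p : List (Fin N × Fin N)) (mx : ℕ) (x : Fin N)
    (h : crossData (edgeNodes p) = some (mx, x)) :
    Emap p = p.take ((edgeNodes p).idxOf x) ++ p.drop mx := by
  unfold Emap crossData
  rw [show crossDataAux [] (edgeNodes p) = some (mx, x) from h]

lemma Lmap_eq (p : List (Fin N × Fin N)) (mx : ℕ) (x : Fin N)
    (h : crossData (edgeNodes p) = some (mx, x)) :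
    Lmap p = (p.drop ((edgeNodes p).idxOf x)).take (mx - (edgeNodes p).idxOf x) := by
  unfold Lmap crossData
  rw [show crossDataAux [] (edgeNodes p) = some (mx, x) from h]

lemma Emap_none (p : List (Fin N × Fin N)) (h : crossData (edgeNodes p) = none) :
    Emap p = p := by
  unfold Emap crossData
  rw [show crossDataAux [] (edgeNodes p) = none from h]

lemma Lmap_none (p : List (Fin N × Fin N)) (h : crossData (edgeNodes p) = none) :
    Lmap p = [] := by
  unfold Lmap crossData
  rw [show crossDataAux [] (edgeNodes p) = none from h]

end Helpers

section Main
variable {N : ℕ}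

/-- Reconstruction of the original path from `(Emap p, Lmap p)`. -/
def recon (E L : List (Fin N × Fin N)) : List (Fin N × Fin N) :=
  match L with
  | [] => E
  | e :: _ =>
      E.take ((E.map Prod.fst).idxOf e.1) ++ L ++ E.drop ((E.map Prod.fst).idxOf e.1)

lemma recon_spec (p : List (Fin N × Fin N)) (hp : IsPathList p) :
    recon (Emap p) (Lmap p) = p := by
  cases hc : crossData (edgeNodes p) with
  | none => rw [Emap_none p hc, Lmap_none p hc]; rfl
  | some v =>
    obtain ⟨mx, x⟩ := v
    obtain ⟨hi, hmx, hget⟩ := crossData_some p mx x hc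
    set i := (edgeNodes p).idxOf x with hidef
    have hip : i < p.length := lt_of_lt_of_le hi hmx
    have hne : p ≠ [] := by rintro rfl; simp at hip
    have hen : edgeNodes p = p.map Prod.fst ++ [(p.getLast hne).2] := edgeNodes_eq p hp hne
    have hlen := length_edgeNodes p hne
    -- first coordinates of `p` along the node list
    have hfst : ∀ k (hk : k < p.length), (edgeNodes p)[k]'(by omega) = (p[k]'hk).1 := by
      intro k hk
      rw [List.getElem_of_eq hen, List.getElem_append_left (by simpa using hk),
        List.getElem_map]
    -- the head of `Lmap p` is `p[i]`, whose first coordinate is `x`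
    have hLm : Lmap p = p[i] :: ((p.drop (i + 1)).take (mx - i - 1)) := by
      rw [Lmap_eq p mx x hc, ← hidef, List.drop_eq_getElem_cons hip,
        show mx - i = (mx - i - 1) + 1 by omega, List.take_succ_cons]
      simp
    have hx1 : (p[i]'hip).1 = x := by
      rw [← hfst i hip]
      exact List.getElem_idxOf (by omega)
    -- computing the index used by `recon`
    have hEm : Emap p = p.take i ++ p.drop mx := Emap_eq p mx x hc
    have htake_fst : (p.take i).map Prod.fst = (edgeNodes p).take i := by
      rw [hen, List.take_append, List.map_take,
        show i - (p.map Prod.fst).length = 0 by simp; omega]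
      simp
    have hxnot : x ∉ (p.take i).map Prod.fst := by
      rw [htake_fst]; exact not_mem_take_indexOf
    have hidx : ((Emap p).map Prod.fst).idxOf x = i := by
      rw [hEm, List.map_append, List.idxOf_append_of_notMem hxnot]
      have h0 : ((p.drop mx).map Prod.fst).idxOf x = 0 := by
        rcases Nat.lt_or_ge mx p.length with hlt | hge
        · rw [List.drop_eq_getElem_cons hlt, List.map_cons]
          refine List.idxOf_cons_eq _ ?_
          have : (edgeNodes p)[mx]'(by omega) = x := by
            have := hget
            rwa [List.getElem?_eq_getElem (by omega), Option.some_inj] at this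
          rw [← this, hfst mx hlt]
        · rw [List.drop_eq_nil_of_le hge]; rfl
      rw [h0, List.length_map, List.length_take]
      omega
    -- put everything together
    have hrec : recon (Emap p) (Lmap p) =
        (Emap p).take i ++ Lmap p ++ (Emap p).drop i := by
      rw [hLm, recon, ← hLm, hx1, hidx]
    rw [hrec, hEm, List.take_left' (by simp; omega), List.drop_left' (by simp; omega)]
    exact (decomp p mx x hc).symm

lemma pathWeight_append (W : Matrix (Fin N) (Fin N) ℝ) (a b : List (Fin N × Fin N)) :
    pathWeight W (a ++ b) = pathWeight W a * pathWeight W b := by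
  simp [pathWeight]

lemma pathWeight_Emap_Lmap (W : Matrix (Fin N) (Fin N) ℝ) (p : List (Fin N × Fin N)) :
    pathWeight W (Emap p) * pathWeight W (Lmap p) = pathWeight W p := by
  cases hc : crossData (edgeNodes p) with
  | none => rw [Emap_none p hc, Lmap_none p hc]; simp [pathWeight]
  | some v =>
    obtain ⟨mx, x⟩ := v
    conv_rhs => rw [decomp p mx x hc]
    rw [Emap_eq p mx x hc]
    simp only [pathWeight_append]
    ring

end Main

/-- Corollary `c:recreate2`: `Dec` is injective on `ℙ × ℙ^{(ℕ)}` and preserves the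
extended weight. -/
theorem DecStep_injective_and_weight_preserving
    (N : ℕ) (hN : 1 ≤ N) (W : Matrix (Fin N) (Fin N) ℝ) :
    (∀ X Y : List (Fin N × Fin N) × List (List (Fin N × Fin N)),
      IsPathList X.1 → (∀ l ∈ X.2, IsPathList l) →
      IsPathList Y.1 → (∀ l ∈ Y.2, IsPathList l) →
      DecStep X = DecStep Y → X = Y) ∧
    (∀ X : List (Fin N × Fin N) × List (List (Fin N × Fin N)),
      IsPathList X.1 → (∀ l ∈ X.2, IsPathList l) →
      extWeight W (DecStep X) = extWeight W X) := by
  constructor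
  · intro X Y hX1 _ hY1 _ h
    rw [DecStep, DecStep, Prod.mk.injEq] at h
    obtain ⟨hE, hL⟩ := h
    obtain ⟨h2, h3⟩ := List.append_inj' hL rfl
    have h3' : Lmap X.1 = Lmap Y.1 := by injection h3
    have h1 : X.1 = Y.1 := by
      rw [← recon_spec X.1 hX1, ← recon_spec Y.1 hY1, hE, h3']
    exact Prod.ext h1 h2
  · intro X hX1 _
    rw [DecStep, extWeight, extWeight]
    simp only [List.map_append, List.map_cons, List.map_nil, List.prod_append,
      List.prod_cons, List.prod_nil]
    rw [show pathWeight W (Emap X.1) * ((List.map (pathWeight W) X.2).prod *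
      (pathWeight W (Lmap X.1) * 1)) = (pathWeight W (Emap X.1) * pathWeight W (Lmap X.1)) *
      (List.map (pathWeight W) X.2).prod by ring, pathWeight_Emap_Lmap]
end
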